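/- Let R be a (possibly noncommutative) division ring, let A_f ∈ R^{n_f×n_f} and A_g ∈ R^{n_g×n_g} be invertible, let u_f ∈ R^{1×n_f}, v_f ∈ R^{n_f×1}, u_g ∈ R^{1×n_g}, v_g ∈ R^{n_g×1}, and set f = u_f A_f⁻¹ v_f and g = u_g A_g⁻¹ v_g. Then the block matrix A = [[A_f, -v_f u_g],[0, A_g]] is invertible and [u_f, 0] A⁻¹ [0; v_g] = f·g. -/

import Mathlib

/-!
With `A_f⁻¹ = B_f` and `A_g⁻¹ = B_g`, the upper block-triangular matrix `[[A_f, C], [0, A_g]]`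
has the two-sided inverse `[[B_f, -B_f C B_g], [0, B_g]]`; this needs no commutativity.
For `C = -v_f u_g` the corner entry of the inverse is `B_f v_f u_g B_g`, which `[u_f, 0]` and
`[0; v_g]` cut out as `(u_f B_f v_f) (u_g B_g v_g) = f g`, a product of `1 × 1` matrices.
-/

namespace Matrix

section Semiring

variable {l m n m' n' o R : Type*} [Semiring R]

theorem fromCols_zero_mul_fromBlocks_mul_fromRows_zero [Fintype m] [Fintype n] [Fintype m']
    [Fintype n'] (u : Matrix l m R) (w : Matrix n' o R) (P : Matrix m m' R) (Q : Matrix m n' R)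
    (S : Matrix n m' R) (T : Matrix n n' R) :
    Matrix.fromCols u (0 : Matrix l n R) * fromBlocks P Q S T *
      Matrix.fromRows (0 : Matrix m' o R) w = u * Q * w := by
  simp [fromCols_mul_fromBlocks, fromCols_mul_fromRows]

theorem mul_apply_of_unique {ι : Type*} [Unique ι] [Fintype ι]
    (X : Matrix l ι R) (Y : Matrix ι o R) (i : l) (k : o) :
    (X * Y) i k = X i default * Y default k := by
  rw [mul_apply, Fintype.sum_unique]

end Semiring

section Ring

variable {m n R : Type*} [Fintype m] [Fintype n] [DecidableEq m] [DecidableEq n] [Ring R]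

theorem fromBlocks_zero₂₁_mul_fromBlocks_inv {A A' : Matrix m m R} {D D' : Matrix n n R}
    (hA : A * A' = 1) (hD : D * D' = 1) (B : Matrix m n R) :
    fromBlocks A B 0 D * fromBlocks A' (-(A' * B * D')) 0 D' = 1 := by
  simp [fromBlocks_multiply, ← Matrix.mul_assoc, hA, hD]

theorem fromBlocks_inv_mul_fromBlocks_zero₂₁ {A A' : Matrix m m R} {D D' : Matrix n n R}
    (hA : A' * A = 1) (hD : D' * D = 1) (B : Matrix m n R) :
    fromBlocks A' (-(A' * B * D')) 0 D' * fromBlocks A B 0 D = 1 := by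
  simp [fromBlocks_multiply, Matrix.mul_assoc, hA, hD]

end Ring

end Matrix

open Matrix

theorem stmt0 {D : Type*} [DivisionRing D] {nf ng : ℕ}
    (Af : Matrix (Fin nf) (Fin nf) D) (Ag : Matrix (Fin ng) (Fin ng) D)
    (Bf : Matrix (Fin nf) (Fin nf) D) (Bg : Matrix (Fin ng) (Fin ng) D)
    (hBf : Af * Bf = 1 ∧ Bf * Af = 1) (hBg : Ag * Bg = 1 ∧ Bg * Ag = 1)
    (uf : Matrix (Fin 1) (Fin nf) D) (vf : Matrix (Fin nf) (Fin 1) D)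
    (ug : Matrix (Fin 1) (Fin ng) D) (vg : Matrix (Fin ng) (Fin 1) D)
    (u' : Matrix (Fin 1) (Fin nf ⊕ Fin ng) D)
    (v' : Matrix (Fin nf ⊕ Fin ng) (Fin 1) D)
    (hu' : u' = Matrix.of fun (i : Fin 1) => Sum.elim (uf i) (fun _ => (0 : D)))
    (hv' : v' = Matrix.of (Sum.elim (fun (_ : Fin nf) (_ : Fin 1) => (0 : D)) (fun i => vg i)))
    (f g : D) (hf : f = (uf * Bf * vf) 0 0) (hg : g = (ug * Bg * vg) 0 0) :
    ∃ B : Matrix (Fin nf ⊕ Fin ng) (Fin nf ⊕ Fin ng) D,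
      Matrix.fromBlocks Af (-(vf * ug)) 0 Ag * B = 1 ∧
      B * Matrix.fromBlocks Af (-(vf * ug)) 0 Ag = 1 ∧
      (u' * B * v') 0 0 = f * g := by
  refine ⟨fromBlocks Bf (-(Bf * -(vf * ug) * Bg)) 0 Bg,
    fromBlocks_zero₂₁_mul_fromBlocks_inv hBf.1 hBg.1 _,
    fromBlocks_inv_mul_fromBlocks_zero₂₁ hBf.2 hBg.2 _, ?_⟩
  have hu : u' = fromCols uf 0 := hu'
  have hv : v' = fromRows 0 vg := hv'
  have hcorner : uf * -(Bf * -(vf * ug) * Bg) * vg = (uf * Bf * vf) * (ug * Bg * vg) := by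
    simp only [Matrix.mul_neg, Matrix.neg_mul, neg_neg, Matrix.mul_assoc]
  rw [hu, hv, fromCols_zero_mul_fromBlocks_mul_fromRows_zero, hcorner, mul_apply_of_unique,
    hf, hg]
  rfl
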